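/- arXiv:2605.14024 — 4 statements merged into one kernel-verified Lean document; each statement's English description precedes it below -/
import Mathlib

section
/- Let u : R × R → R be a smooth solution of the conservative extended KdV equation u_t + 6 u u_x + u_{xxx} + ε (c1 u^2 u_x + 2 c3 u_x u_{xx} + c3 u u_{xxx} + c4 u_{xxxxx}) = 0. Then the energy conservation law holds pointwise: ∂_t (u^2/2) + ∂_x ( 2 u^3 + u u_{xx} − (1/2) u_x^2 + ε ( (1/4) c1 u^4 + c3 u^2 u_{xx} + c4 u u_{xxxx} − c4 u_x u_{xxx} + (1/2) c4 u_{xx}^2 ) ) = 0. -/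
/-- Energy conservation law for the conservative extended KdV equation. -/
theorem consEkdv_energy_conservation (ε c1 c3 c4 : ℝ) (u : ℝ → ℝ → ℝ)
    (hu : ContDiff ℝ (⊤ : ℕ∞) (Function.uncurry u))
    (heq : ∀ x t,
      deriv (fun t' => u x t') t
        + 6 * u x t * deriv (fun y => u y t) x
        + iteratedDeriv 3 (fun y => u y t) x
        + ε * (c1 * (u x t) ^ 2 * deriv (fun y => u y t) x
            + 2 * c3 * deriv (fun y => u y t) x * iteratedDeriv 2 (fun y => u y t) x
            + c3 * u x t * iteratedDeriv 3 (fun y => u y t) x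
            + c4 * iteratedDeriv 5 (fun y => u y t) x) = 0) :
    ∀ x t,
      deriv (fun t' => (u x t') ^ 2 / 2) t
        + deriv (fun y =>
            2 * (u y t) ^ 3 + u y t * iteratedDeriv 2 (fun z => u z t) y
              - 1 / 2 * (deriv (fun z => u z t) y) ^ 2
              + ε * (1 / 4 * c1 * (u y t) ^ 4
                  + c3 * (u y t) ^ 2 * iteratedDeriv 2 (fun z => u z t) y
                  + c4 * u y t * iteratedDeriv 4 (fun z => u z t) y
                  - c4 * deriv (fun z => u z t) y * iteratedDeriv 3 (fun z => u z t) y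
                  + 1 / 2 * c4 * (iteratedDeriv 2 (fun z => u z t) y) ^ 2)) x = 0 := by
  intro x t
  have key := heq x t
  set f : ℝ → ℝ := fun z => u z t with hfdef
  set g : ℝ → ℝ := fun t' => u x t' with hgdef
  have hf : ContDiff ℝ (⊤ : ℕ∞) f := by
    have : f = Function.uncurry u ∘ (fun z => (z, t)) := rfl
    rw [this]
    exact (hu.of_le (by simp)).comp (contDiff_id.prodMk contDiff_const)
  have hg : ContDiff ℝ (⊤ : ℕ∞) g := by
    have : g = Function.uncurry u ∘ (fun t' => (x, t')) := rfl
    rw [this]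
    exact (hu.of_le (by simp)).comp (contDiff_const.prodMk contDiff_id)
  have hsmooth : ∀ n : ℕ, ContDiff ℝ (⊤ : ℕ∞) (iteratedDeriv n f) := by
    intro n
    rw [iteratedDeriv_eq_iterate]
    exact hf.iterate_deriv n
  -- HasDerivAt for iterated derivatives
  have hD : ∀ n : ℕ, HasDerivAt (iteratedDeriv n f) (iteratedDeriv (n + 1) f x) x := by
    intro n
    have hdiff : DifferentiableAt ℝ (iteratedDeriv n f) x :=
      ((hsmooth n).differentiable (by simp)).differentiableAt
    have := hdiff.hasDerivAt
    rwa [show deriv (iteratedDeriv n f) x = iteratedDeriv (n + 1) f x by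
      rw [iteratedDeriv_succ]] at this
  have h0 : HasDerivAt f (iteratedDeriv 1 f x) x := by
    simpa [iteratedDeriv_zero] using hD 0
  have h1 : HasDerivAt (deriv f) (iteratedDeriv 2 f x) x := by
    have := hD 1
    rwa [iteratedDeriv_one] at this
  -- time derivative
  have hgd : HasDerivAt g (deriv g t) t :=
    ((hg.differentiable (by simp)).differentiableAt).hasDerivAt
  have ht : HasDerivAt (fun t' => (u x t') ^ 2 / 2)
      (2 * (u x t) ^ 1 * deriv g t / 2) t := by
    have : HasDerivAt (fun t' => (g t') ^ 2) (2 * (g t) ^ 1 * deriv g t) t := hgd.pow 2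
    exact this.div_const 2
  -- flux derivative
  have hx : HasDerivAt (fun y =>
      2 * (u y t) ^ 3 + u y t * iteratedDeriv 2 f y
        - 1 / 2 * (deriv f y) ^ 2
        + ε * (1 / 4 * c1 * (u y t) ^ 4
            + c3 * (u y t) ^ 2 * iteratedDeriv 2 f y
            + c4 * u y t * iteratedDeriv 4 f y
            - c4 * deriv f y * iteratedDeriv 3 f y
            + 1 / 2 * c4 * (iteratedDeriv 2 f y) ^ 2))
      (2 * (3 * (u x t) ^ 2 * iteratedDeriv 1 f x)
        + (iteratedDeriv 1 f x * iteratedDeriv 2 f x + u x t * iteratedDeriv 3 f x)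
        - 1 / 2 * (2 * (deriv f x) ^ 1 * iteratedDeriv 2 f x)
        + ε * (1 / 4 * c1 * (4 * (u x t) ^ 3 * iteratedDeriv 1 f x)
            + (c3 * (2 * (u x t) ^ 1 * iteratedDeriv 1 f x) * iteratedDeriv 2 f x
              + c3 * (u x t) ^ 2 * iteratedDeriv 3 f x)
            + (c4 * iteratedDeriv 1 f x * iteratedDeriv 4 f x
              + c4 * u x t * iteratedDeriv 5 f x)
            - (c4 * iteratedDeriv 2 f x * iteratedDeriv 3 f x
              + c4 * deriv f x * iteratedDeriv 4 f x)
            + 1 / 2 * c4 * (2 * (iteratedDeriv 2 f x) ^ 1 * iteratedDeriv 3 f x))) x := by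
    exact (((((h0.pow 3).const_mul 2).add (h0.mul (hD 2))).sub ((h1.pow 2).const_mul (1 / 2))).add (((((((h0.pow 4).const_mul (1 / 4 * c1)).add ((((h0.pow 2).const_mul c3).mul (hD 2)))).add (((h0.const_mul c4).mul (hD 4)))).sub (((h1.const_mul c4).mul (hD 3)))).add ((((hD 2).pow 2).const_mul (1 / 2 * c4)))).const_mul ε))
  rw [ht.deriv, hx.deriv]
  have h1' : deriv f x = iteratedDeriv 1 f x := by rw [iteratedDeriv_one]
  rw [h1'] at key ⊢
  linear_combination (u x t) * key
end

section
/- Fix a_s > 0 and real constants c1, c3, c4 with c4 ≠ 0, and define f(ε) as in the inverse-width root formula: f(ε) = (1/4) * sqrt( ( 7 + 5 a_s c3 ε − sqrt( 49 − 560 a_s c4 ε − 80 a_s^2 c1 c4 ε^2 + 25 a_s^2 c3^2 ε^2 + 70 a_s c3 ε ) ) / (5 ε c4) ). Then f admits the first-order expansion f(ε) = sqrt(a_s/2) + ε a_s^{3/2} ( (√2/28) c1 − (5√2/28) c3 + (5√2/7) c4 ) + O(ε^2) as ε → 0⁺, i.e. (f(ε) − sqrt(a_s/2) − ε a_s^{3/2}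 ((√2/28) c1 − (5√2/28) c3 + (5√2/7) c4 ))/ε^2 is bounded as ε → 0⁺. -/
open Filter Topology Asymptotics

/-! Multiplying by the conjugate `7 + 5 a c3 ε + √D(ε)` cancels the factor `5 ε c4` of the
denominator, because `(7 + 5 a c3 ε)² - D(ε) = 80 a c4 ε (7 + a c1 ε)`. Hence for `ε ≠ 0` near `0`
the function equals `√r(ε)` with `r(ε) = a (7 + a c1 ε) / (7 + 5 a c3 ε + √D(ε))`, which is smooth
at `0` with `r(0) = a / 2`. The claimed expansion is the first-order Taylor polynomial of `√r`,
whose remainder is `O(ε²)` by the mean value theorem applied to the remainder's derivative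
`(√r)'(ε) - (√r)'(0) = O(ε)`. -/

theorem isBigO_sub_pow_succ_of_hasDerivAt {E : Type*} [NormedAddCommGroup E] [NormedSpace ℝ E]
    {f f' : ℝ → E} {x₀ : ℝ} {n : ℕ} (hff' : ∀ᶠ x in 𝓝 x₀, HasDerivAt f (f' x) x)
    (hf' : f' =O[𝓝 x₀] fun x ↦ (x - x₀) ^ n) :
    (fun x ↦ f x - f x₀) =O[𝓝 x₀] fun x ↦ (x - x₀) ^ (n + 1) := by
  obtain ⟨C, hC₀, hC⟩ := hf'.exists_nonneg
  have hseg : ∀ᶠ x in 𝓝 x₀, ∀ y ∈ segment ℝ x₀ x,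
      HasDerivAt f (f' y) y ∧ ‖f' y‖ ≤ C * ‖(y - x₀) ^ n‖ := by
    simpa only [nhdsWithin_univ] using convex_univ.eventually_nhdsWithin_segment (Set.mem_univ x₀)
      (by simpa only [nhdsWithin_univ] using hff'.and hC.bound)
  refine IsBigO.of_bound C ?_
  filter_upwards [hseg] with x hx
  have hbound : ∀ y ∈ segment ℝ x₀ x, ‖f' y‖ ≤ C * ‖x - x₀‖ ^ n := fun y hy ↦ by
    refine (hx y hy).2.trans ?_
    rw [norm_pow]
    gcongr
    exact norm_sub_le_of_mem_segment hy
  calc ‖f x - f x₀‖ ≤ C * ‖x - x₀‖ ^ n * ‖x - x₀‖ :=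
        (convex_segment x₀ x).norm_image_sub_le_of_norm_hasDerivWithin_le
          (fun y hy ↦ (hx y hy).1.hasDerivWithinAt) hbound (left_mem_segment ℝ x₀ x)
          (right_mem_segment ℝ x₀ x)
    _ = C * ‖(x - x₀) ^ (n + 1)‖ := by rw [norm_pow, pow_succ, mul_assoc]

theorem ContDiffAt.isBigO_sub_sub_smul_deriv {E : Type*} [NormedAddCommGroup E]
    [NormedSpace ℝ E] {f : ℝ → E} {x₀ : ℝ} (hf : ContDiffAt ℝ 2 f x₀) :
    (fun x ↦ f x - f x₀ - (x - x₀) • deriv f x₀) =O[𝓝 x₀] fun x ↦ (x - x₀) ^ 2 := by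
  have hderiv : ∀ᶠ x in 𝓝 x₀,
      HasDerivAt (fun x ↦ f x - (x - x₀) • deriv f x₀) (deriv f x - deriv f x₀) x := by
    filter_upwards [hf.eventually (by simp)] with x hx
    simpa using (hx.differentiableAt (by simp)).hasDerivAt.fun_sub
      (((hasDerivAt_id x).sub_const x₀).smul_const (deriv f x₀))
  have hderiv' : (fun x ↦ deriv f x - deriv f x₀) =O[𝓝 x₀] fun x ↦ (x - x₀) ^ 1 := by
    simpa using ((hf.derivWithin (m := 1) (by norm_num)).differentiableAt
      (by simp)).isBigO_sub
  simpa [sub_right_comm] using isBigO_sub_pow_succ_of_hasDerivAt hderiv hderiv'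

theorem Real.sub_sqrt_eq_div_add_sqrt {u d : ℝ} (hd : 0 ≤ d) (h : u + √d ≠ 0) :
    u - √d = (u ^ 2 - d) / (u + √d) := by
  rw [eq_div_iff h]
  linear_combination -Real.sq_sqrt hd

section InverseWidth

variable (a c1 c3 c4 : ℝ)

noncomputable def widthDisc (ε : ℝ) : ℝ :=
  49 - 560 * a * c4 * ε - 80 * a ^ 2 * c1 * c4 * ε ^ 2 + 25 * a ^ 2 * c3 ^ 2 * ε ^ 2
    + 70 * a * c3 * ε

noncomputable def widthRatio (ε : ℝ) : ℝ :=
  a * (7 + a * c1 * ε) / (7 + 5 * a * c3 * ε + √(widthDisc a c1 c3 c4 ε))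

theorem widthDisc_zero : widthDisc a c1 c3 c4 0 = 49 := by simp [widthDisc]

theorem sq_sub_widthDisc (ε : ℝ) :
    (7 + 5 * a * c3 * ε) ^ 2 - widthDisc a c1 c3 c4 ε
      = 5 * ε * c4 * (16 * a * (7 + a * c1 * ε)) := by
  unfold widthDisc; ring

theorem sqrt_widthDisc_zero : √(widthDisc a c1 c3 c4 0) = 7 := by
  rw [widthDisc_zero, show (49 : ℝ) = 7 ^ 2 by norm_num, Real.sqrt_sq (by norm_num)]

theorem widthRatio_zero : widthRatio a c1 c3 c4 0 = a / 2 := by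
  rw [widthRatio, sqrt_widthDisc_zero]; ring

theorem contDiffAt_widthRatio {n : WithTop ℕ∞} : ContDiffAt ℝ n (widthRatio a c1 c3 c4) 0 := by
  have hsqrt : ContDiffAt ℝ n (fun ε ↦ √(widthDisc a c1 c3 c4 ε)) 0 :=
    ContDiffAt.sqrt (by unfold widthDisc; fun_prop) (by rw [widthDisc_zero]; norm_num)
  have hlin : ContDiffAt ℝ n (fun ε : ℝ ↦ 7 + 5 * a * c3 * ε) 0 := by fun_prop
  refine ContDiffAt.div (by fun_prop) (hlin.add hsqrt) ?_
  rw [sqrt_widthDisc_zero]; norm_num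

theorem hasDerivAt_widthRatio :
    HasDerivAt (widthRatio a c1 c3 c4) (a ^ 2 * (c1 - 5 * c3 + 20 * c4) / 14) 0 := by
  have hdisc : HasDerivAt (widthDisc a c1 c3 c4) (70 * a * c3 - 560 * a * c4) 0 := by
    have := (((hasDerivAt_id (0 : ℝ)).pow 2).const_mul
      (25 * a ^ 2 * c3 ^ 2 - 80 * a ^ 2 * c1 * c4)).add
      ((hasDerivAt_id (0 : ℝ)).const_mul (70 * a * c3 - 560 * a * c4)) |>.const_add 49
    refine (this.congr_deriv (by simp)).congr_of_eventuallyEq (.of_forall fun ε ↦ ?_)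
    simp only [widthDisc, Pi.add_apply, Pi.pow_apply, id]
    ring
  have hsqrt := hdisc.sqrt (by rw [widthDisc_zero]; norm_num)
  have hnum : HasDerivAt (fun ε : ℝ ↦ a * (7 + a * c1 * ε)) (a * (a * c1)) 0 := by
    simpa using (((hasDerivAt_id (0 : ℝ)).const_mul (a * c1)).const_add 7).const_mul a
  have hden : HasDerivAt (fun ε : ℝ ↦ 7 + 5 * a * c3 * ε) (5 * a * c3) 0 := by
    simpa using ((hasDerivAt_id (0 : ℝ)).const_mul (5 * a * c3)).const_add 7
  refine (hnum.div (hden.fun_add hsqrt) ?_).congr_deriv ?_ <;> rw [sqrt_widthDisc_zero]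
  · norm_num
  · field_simp
    ring

theorem eventually_div_eq_widthRatio (hc4 : c4 ≠ 0) :
    ∀ᶠ ε in 𝓝[≠] 0, (7 + 5 * a * c3 * ε - √(widthDisc a c1 c3 c4 ε)) / (5 * ε * c4)
      = 16 * widthRatio a c1 c3 c4 ε := by
  have hdisc : ∀ᶠ ε in 𝓝 0, 0 < widthDisc a c1 c3 c4 ε :=
    continuousAt_const.eventually_lt (by unfold widthDisc; fun_prop)
      (by rw [widthDisc_zero]; norm_num)
  have hlin : ∀ᶠ ε : ℝ in 𝓝 0, 0 < 7 + 5 * a * c3 * ε :=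
    continuousAt_const.eventually_lt
      (by fun_prop : Continuous fun ε : ℝ ↦ 7 + 5 * a * c3 * ε).continuousAt (by norm_num)
  filter_upwards [nhdsWithin_le_nhds hdisc, nhdsWithin_le_nhds hlin, self_mem_nhdsWithin]
    with ε hdisc hlin (hε : ε ≠ 0)
  have hpos : 0 < 7 + 5 * a * c3 * ε + √(widthDisc a c1 c3 c4 ε) := by positivity
  rw [Real.sub_sqrt_eq_div_add_sqrt hdisc.le hpos.ne', sq_sub_widthDisc, widthRatio]
  field_simp [hε, hc4]

end InverseWidth

theorem expansion_coeff_eq {a : ℝ} (c1 c3 c4 : ℝ) (ha : 0 < a) :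
    a ^ 2 * (c1 - 5 * c3 + 20 * c4) / 14 / (2 * √(a / 2))
      = a ^ ((3 : ℝ) / 2) * (√2 / 28 * c1 - 5 * √2 / 28 * c3 + 5 * √2 / 7 * c4) := by
  have h32 : a ^ ((3 : ℝ) / 2) = a * √a := by
    rw [show (3 : ℝ) / 2 = 1 + 1 / 2 by norm_num, Real.rpow_add ha, Real.rpow_one,
      ← Real.sqrt_eq_rpow]
  rw [h32, Real.sqrt_div ha.le]
  field_simp
  linear_combination (-196 * (c1 - 5 * c3 + 20 * c4)) * Real.sq_sqrt ha.le

/-- First-order expansion of the inverse-width root: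
`f(ε) = √(a/2) + ε a^{3/2}((√2/28)c1 − (5√2/28)c3 + (5√2/7)c4) + O(ε²)` as `ε → 0⁺`. -/
theorem inverse_width_expansion (a c1 c3 c4 : ℝ) (ha : 0 < a) (hc4 : c4 ≠ 0) :
    (fun ε : ℝ =>
        1 / 4 * Real.sqrt
          ((7 + 5 * a * c3 * ε
              - Real.sqrt (49 - 560 * a * c4 * ε - 80 * a ^ 2 * c1 * c4 * ε ^ 2
                  + 25 * a ^ 2 * c3 ^ 2 * ε ^ 2 + 70 * a * c3 * ε))
            / (5 * ε * c4))
        - Real.sqrt (a / 2)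
        - ε * a ^ ((3 : ℝ) / 2)
            * (Real.sqrt 2 / 28 * c1 - 5 * Real.sqrt 2 / 28 * c3 + 5 * Real.sqrt 2 / 7 * c4))
      =O[𝓝[>] 0] fun ε : ℝ => ε ^ 2 := by
  have hratio0 : widthRatio a c1 c3 c4 0 ≠ 0 := by rw [widthRatio_zero]; positivity
  have hsmooth : ContDiffAt ℝ 2 (fun ε ↦ √(widthRatio a c1 c3 c4 ε)) 0 :=
    (contDiffAt_widthRatio a c1 c3 c4).sqrt hratio0
  have hderiv : deriv (fun ε ↦ √(widthRatio a c1 c3 c4 ε)) 0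
      = a ^ ((3 : ℝ) / 2) * (√2 / 28 * c1 - 5 * √2 / 28 * c3 + 5 * √2 / 7 * c4) := by
    rw [((hasDerivAt_widthRatio a c1 c3 c4).sqrt hratio0).deriv, widthRatio_zero,
      expansion_coeff_eq c1 c3 c4 ha]
  have htaylor := hsmooth.isBigO_sub_sub_smul_deriv
  simp only [widthRatio_zero, hderiv, sub_zero, smul_eq_mul] at htaylor
  refine (htaylor.mono nhdsWithin_le_nhds).congr' ?_ .rfl
  filter_upwards [nhdsWithin_mono _ (by simp) (eventually_div_eq_widthRatio a c1 c3 c4 hc4)]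
    with ε hε
  rw [widthDisc] at hε
  rw [hε, Real.sqrt_mul (by norm_num),
    show √16 = 4 by rw [show (16 : ℝ) = 4 ^ 2 by norm_num, Real.sqrt_sq (by norm_num)]]
  ring
end

section
/- Let u : R → R be smooth with u, u', u'' → 0 as θ → −∞, and suppose u satisfies the integrated travelling-wave equation −V u + 3 u^2 + u'' + ε c1 u^3 / 3 + (ε/2)(c2 − c3) (u')^2 + ε c3 u u'' + ε c4 u'''' = 0 on R. If c2 = 2 c3, then the pointwise energy identity −(V/2) u^2 + u^3 + (1/2) (u')^2 + (ε c1 / 12) u^4 + ε c4 ( u' u''' − (1/2) (u'')^2 ) + (ε/2) c3 u (u')^2 = 0 holds everywhere on R, provided additionally u''', u'''' and all products appearing decay to 0 at −∞. -/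
open Filter Topology

/-- If `u` solves the integrated travelling-wave equation of the extended KdV model
with `c2 = 2c3`, and `u` together with its derivatives decays at `−∞`, then the pointwise
energy identity holds everywhere. -/
theorem travelling_wave_energy_identity (V ε c1 c2 c3 c4 : ℝ) (u : ℝ → ℝ)
    (hu : ContDiff ℝ (⊤ : ℕ∞) u)
    (h0 : Tendsto u atBot (𝓝 0))
    (h1 : Tendsto (deriv u) atBot (𝓝 0))
    (h2 : Tendsto (iteratedDeriv 2 u) atBot (𝓝 0))
    (h3 : Tendsto (iteratedDeriv 3 u) atBot (𝓝 0))
    (h4 : Tendsto (iteratedDeriv 4 u) atBot (𝓝 0))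
    (heq : ∀ θ : ℝ,
      -V * u θ + 3 * u θ ^ 2 + iteratedDeriv 2 u θ
        + ε * c1 * u θ ^ 3 / 3
        + ε / 2 * (c2 - c3) * (deriv u θ) ^ 2
        + ε * c3 * u θ * iteratedDeriv 2 u θ
        + ε * c4 * iteratedDeriv 4 u θ = 0)
    (hc : c2 = 2 * c3) :
    ∀ θ : ℝ,
      -(V / 2) * u θ ^ 2 + u θ ^ 3 + 1 / 2 * (deriv u θ) ^ 2
        + ε * c1 / 12 * u θ ^ 4
        + ε * c4 * (deriv u θ * iteratedDeriv 3 u θ - 1 / 2 * (iteratedDeriv 2 u θ) ^ 2)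
        + ε / 2 * c3 * u θ * (deriv u θ) ^ 2 = 0 := by
  subst hc
  -- the energy function
  set G : ℝ → ℝ := fun x =>
    -(V / 2) * u x ^ 2 + u x ^ 3 + 1 / 2 * (deriv u x) ^ 2
      + ε * c1 / 12 * u x ^ 4
      + ε * c4 * (deriv u x * iteratedDeriv 3 u x - 1 / 2 * (iteratedDeriv 2 u x) ^ 2)
      + ε / 2 * c3 * (u x * (deriv u x) ^ 2) with hG
  -- derivatives of iterated derivatives
  have hd : ∀ (n : ℕ) (x : ℝ),
      HasDerivAt (iteratedDeriv n u) (iteratedDeriv (n + 1) u x) x := by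
    intro n x
    rw [iteratedDeriv_succ]
    exact ((hu.differentiable_iteratedDeriv n (by exact_mod_cast ENat.coe_lt_top n)) x).hasDerivAt
  have hu0 : ∀ x : ℝ, HasDerivAt u (deriv u x) x := by
    intro x
    have := hd 0 x
    simpa [iteratedDeriv_one] using this
  have hu1 : ∀ x : ℝ, HasDerivAt (deriv u) (iteratedDeriv 2 u x) x := by
    intro x
    have := hd 1 x
    simpa [iteratedDeriv_one] using this
  have hu2 : ∀ x : ℝ, HasDerivAt (iteratedDeriv 2 u) (iteratedDeriv 3 u x) x := hd 2
  have hu3 : ∀ x : ℝ, HasDerivAt (iteratedDeriv 3 u) (iteratedDeriv 4 u x) x := hd 3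
  -- G has zero derivative
  have hG0 : ∀ x : ℝ, HasDerivAt G 0 x := by
    intro x
    have H : HasDerivAt G
        (-(V / 2) * (2 * u x ^ 1 * deriv u x)
          + 3 * u x ^ 2 * deriv u x
          + 1 / 2 * (2 * (deriv u x) ^ 1 * iteratedDeriv 2 u x)
          + ε * c1 / 12 * (4 * u x ^ 3 * deriv u x)
          + ε * c4 * ((iteratedDeriv 2 u x * iteratedDeriv 3 u x
              + deriv u x * iteratedDeriv 4 u x)
            - 1 / 2 * (2 * (iteratedDeriv 2 u x) ^ 1 * iteratedDeriv 3 u x))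
          + ε / 2 * c3 * (deriv u x * (deriv u x) ^ 2
              + u x * (2 * (deriv u x) ^ 1 * iteratedDeriv 2 u x))) x := by
      exact ((((((((hu0 x).pow 2).const_mul (-(V / 2))).add ((hu0 x).pow 3)).add
          (((hu1 x).pow 2).const_mul (1 / 2))).add
          (((hu0 x).pow 4).const_mul (ε * c1 / 12))).add
          ((((hu1 x).mul (hu3 x)).sub (((hu2 x).pow 2).const_mul (1 / 2))).const_mul
            (ε * c4))).add
          (((hu0 x).mul ((hu1 x).pow 2)).const_mul (ε / 2 * c3)))
    have hzero :
        (-(V / 2) * (2 * u x ^ 1 * deriv u x)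
          + 3 * u x ^ 2 * deriv u x
          + 1 / 2 * (2 * (deriv u x) ^ 1 * iteratedDeriv 2 u x)
          + ε * c1 / 12 * (4 * u x ^ 3 * deriv u x)
          + ε * c4 * ((iteratedDeriv 2 u x * iteratedDeriv 3 u x
              + deriv u x * iteratedDeriv 4 u x)
            - 1 / 2 * (2 * (iteratedDeriv 2 u x) ^ 1 * iteratedDeriv 3 u x))
          + ε / 2 * c3 * (deriv u x * (deriv u x) ^ 2
              + u x * (2 * (deriv u x) ^ 1 * iteratedDeriv 2 u x))) = 0 := by
      linear_combination (deriv u x) * heq x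
    rw [hzero] at H
    exact H
  -- G is constant
  have hconst : ∀ x y : ℝ, G x = G y := fun x y =>
    is_const_of_deriv_eq_zero (fun z => (hG0 z).differentiableAt)
      (fun z => (hG0 z).deriv) x y
  -- G tends to 0 at -∞
  have hlim : Tendsto G atBot (𝓝 0) := by
    have : Tendsto G atBot (𝓝
        (-(V / 2) * 0 ^ 2 + 0 ^ 3 + 1 / 2 * 0 ^ 2 + ε * c1 / 12 * 0 ^ 4
          + ε * c4 * ((0:ℝ) * 0 - 1 / 2 * 0 ^ 2) + ε / 2 * c3 * ((0:ℝ) * 0 ^ 2))) := by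
      exact ((((((h0.pow 2).const_mul (-(V / 2))).add (h0.pow 3)).add
          ((h1.pow 2).const_mul (1 / 2))).add
          ((h0.pow 4).const_mul (ε * c1 / 12))).add
          (((h1.mul h3).sub ((h2.pow 2).const_mul (1 / 2))).const_mul (ε * c4))).add
          ((h0.mul (h1.pow 2)).const_mul (ε / 2 * c3))
    simpa using this
  intro θ
  have hθ : Tendsto G atBot (𝓝 (G θ)) := by
    have : G = fun _ => G θ := funext fun y => hconst y θ
    rw [this]
    exact tendsto_const_nhds
  have : G θ = 0 := tendsto_nhds_unique hθ hlim
  have := this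
  simp only [hG] at this
  linarith
end

section
/- Let a > 0, w > 0, V be reals and define φ : R → R (up to an additive constant) by φ'(θ) = a sech^2(wθ). Then the averaged Lagrangian L̄ = ∫_{-∞}^{∞} [ −(V/2) (φ')^2 + (φ')^3 − (1/2) (φ'')^2 + ε ( (c1/12) (φ')^4 + (c3/2) φ' (φ'')^2 + (c3/2) (φ')^2 φ''' + (c4/2) (φ''')^2 ) ] dθ equals (16/15) a^3 / w − (8/15) w a^2 − (2/3) V a^2 / w + ε ( (8/105) (a^4 / w) c1 − (32/105) a^3 w c3 + (32/21) w^3 a^2 c4 ). -/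
/-!
With `T = tanh (w θ)` one has `sech² (w θ) = 1 - T²` and `dT/dθ = w (1 - T²)`, so `u = a (1 - T²)`
and its first two derivatives are polynomials in `T`, and the Lagrangian density is
`P(T) sech² (w θ)` with `P` a combination of `(1 - T²)^k`, `k = 1, 2, 3`. The substitution
`t = tanh (w θ)` turns the integral into `(1 / w) ∫_{-1}^{1} P(t) dt`, and
`∫_{-1}^{1} (1 - t²)^k dt = 4/3, 16/15, 32/35`.
-/

open MeasureTheory Real Filter Set Topology

theorem integrable_deriv_of_nonneg {g g' : ℝ → ℝ} {m n : ℝ}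
    (hderiv : ∀ x, HasDerivAt g (g' x) x) (hpos : ∀ x, 0 ≤ g' x)
    (hbot : Tendsto g atBot (𝓝 m)) (htop : Tendsto g atTop (𝓝 n)) : Integrable g' := by
  have hint (a b : ℝ) : IntervalIntegrable g' volume a b :=
    intervalIntegral.intervalIntegrable_deriv_of_nonneg
      (fun x _ => (hderiv x).continuousAt.continuousWithinAt) (fun x _ => hderiv x) fun x _ => hpos x
  refine integrable_of_intervalIntegral_norm_tendsto (n - m) (fun i => (hint _ _).1)
    tendsto_neg_atTop_atBot tendsto_id ?_
  have hFTC : (fun i => ∫ x in -i..id i, ‖g' x‖) = fun i => g i - g (-i) := by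
    funext i
    simp only [Real.norm_of_nonneg (hpos _)]
    exact intervalIntegral.integral_eq_sub_of_hasDerivAt (fun x _ => hderiv x) (hint _ _)
  rw [hFTC]
  exact htop.sub (hbot.comp tendsto_neg_atTop_atBot)

namespace Real

theorem one_sub_tanh_sq (x : ℝ) : 1 - tanh x ^ 2 = (1 / cosh x) ^ 2 := by
  rw [tanh_eq_sinh_div_cosh, div_pow, div_pow, sinh_sq]
  field_simp [(cosh_pos x).ne']
  ring

theorem hasDerivAt_tanh (x : ℝ) : HasDerivAt tanh ((1 / cosh x) ^ 2) x := by
  rw [show tanh = fun y => sinh y / cosh y from funext tanh_eq_sinh_div_cosh]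
  refine ((hasDerivAt_sinh x).div (hasDerivAt_cosh x) (cosh_pos x).ne').congr_deriv ?_
  rw [div_pow, one_pow, ← cosh_sq_sub_sinh_sq x]
  ring

@[fun_prop]
theorem continuous_tanh : Continuous tanh :=
  continuous_iff_continuousAt.2 fun x => (hasDerivAt_tanh x).continuousAt

theorem hasDerivAt_tanh_comp_mul (w θ : ℝ) :
    HasDerivAt (fun θ => tanh (w * θ)) (w * (1 - tanh (w * θ) ^ 2)) θ := by
  refine ((hasDerivAt_tanh (w * θ)).comp θ ((hasDerivAt_id θ).const_mul w)).congr_deriv ?_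
  rw [one_sub_tanh_sq, mul_one, mul_comm]

theorem one_sub_tanh_eq_two_div (x : ℝ) : 1 - tanh x = 2 / (exp (2 * x) + 1) := by
  have h : exp (2 * x) = exp x * exp x := by rw [← exp_add]; ring_nf
  rw [tanh_eq, exp_neg, h]
  field_simp
  ring

theorem tendsto_tanh_atTop : Tendsto tanh atTop (𝓝 1) := by
  have h : Tendsto (fun x => 2 / (exp (2 * x) + 1)) atTop (𝓝 0) :=
    tendsto_const_nhds.div_atTop (tendsto_atTop_add_const_right _ _
      (tendsto_exp_atTop.comp (tendsto_id.const_mul_atTop two_pos)))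
  have h' := (tendsto_const_nhds (x := (1 : ℝ))).sub h
  simpa only [← one_sub_tanh_eq_two_div, sub_sub_cancel, sub_zero] using h'

theorem tendsto_tanh_atBot : Tendsto tanh atBot (𝓝 (-1)) := by
  have h := (tendsto_tanh_atTop.comp tendsto_neg_atBot_atTop).neg
  simpa [Function.comp_def, tanh_neg] using h

end Real

theorem integrable_sech_sq : Integrable fun x : ℝ => (1 / cosh x) ^ 2 :=
  integrable_deriv_of_nonneg hasDerivAt_tanh (fun _ => by positivity)
    tendsto_tanh_atBot tendsto_tanh_atTop

theorem integral_comp_tanh_mul_sech_sq {w : ℝ} (hw : 0 < w) {f : ℝ → ℝ} (hf : Continuous f) :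
    ∫ θ, f (tanh (w * θ)) * (1 / cosh (w * θ)) ^ 2 = (∫ t in (-1)..1, f t) / w := by
  set F : ℝ → ℝ := fun u => ∫ t in (-1)..u, f t
  have hF (u : ℝ) : HasDerivAt F (f u) u := (hf.integral_hasStrictDerivAt (-1) u).hasDerivAt
  have hderiv (θ : ℝ) : HasDerivAt (fun θ => F (tanh (w * θ)) / w)
      (f (tanh (w * θ)) * (1 / cosh (w * θ)) ^ 2) θ := by
    refine (((hF _).comp θ ((hasDerivAt_tanh _).comp θ
      ((hasDerivAt_id θ).const_mul w))).div_const w).congr_deriv ?_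
    simp only [Function.comp_apply, id, mul_one]
    field_simp
  obtain ⟨M, hM⟩ := isCompact_Icc.exists_bound_of_continuousOn (hf.continuousOn (s := Icc (-1) 1))
  have hint : Integrable fun θ => f (tanh (w * θ)) * (1 / cosh (w * θ)) ^ 2 := by
    have hcont : Continuous fun θ => f (tanh (w * θ)) * (1 / cosh (w * θ)) ^ 2 := by
      fun_prop (disch := exact fun _ => (cosh_pos _).ne')
    refine ((integrable_sech_sq.comp_mul_left' hw.ne').const_mul M).mono'
      hcont.aestronglyMeasurable (ae_of_all _ fun θ => ?_)
    have htanh : tanh (w * θ) ∈ Icc (-1) 1 :=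
      ⟨(neg_one_lt_tanh _).le, (tanh_lt_one _).le⟩
    rw [norm_mul, Real.norm_of_nonneg (r := (1 / cosh (w * θ)) ^ 2) (by positivity)]
    exact mul_le_mul_of_nonneg_right (hM _ htanh) (by positivity)
  have hlim (l : Filter ℝ) (c : ℝ) (hl : Tendsto tanh l (𝓝 c)) (hwl : Tendsto (w * ·) l l) :
      Tendsto (fun θ => F (tanh (w * θ)) / w) l (𝓝 (F c / w)) :=
    (((hF c).continuousAt.tendsto.comp hl).comp hwl).div_const w
  rw [integral_of_hasDerivAt_of_tendsto hderiv hint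
    (hlim _ _ tendsto_tanh_atBot (tendsto_id.const_mul_atBot hw))
    (hlim _ _ tendsto_tanh_atTop (tendsto_id.const_mul_atTop hw))]
  simp [F]

theorem deriv_sech_sq_profile (a w : ℝ) :
    deriv (fun θ => a * (1 - tanh (w * θ) ^ 2))
      = fun θ => -2 * a * w * (tanh (w * θ) - tanh (w * θ) ^ 3) := by
  funext θ
  refine ((((hasDerivAt_tanh_comp_mul w θ).pow 2).const_sub 1).const_mul a).deriv.trans ?_
  ring

theorem iteratedDeriv_two_sech_sq_profile (a w : ℝ) :
    iteratedDeriv 2 (fun θ => a * (1 - tanh (w * θ) ^ 2))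
      = fun θ => -2 * a * w ^ 2 * (1 - 3 * tanh (w * θ) ^ 2) * (1 - tanh (w * θ) ^ 2) := by
  rw [iteratedDeriv_succ, iteratedDeriv_one, deriv_sech_sq_profile]
  funext θ
  have hT := hasDerivAt_tanh_comp_mul w θ
  refine ((hT.sub (hT.pow 3)).const_mul (-2 * a * w)).deriv.trans ?_
  ring

theorem integral_poly_tanh_mul_sech_sq {w : ℝ} (hw : 0 < w) (A₂ A₃ A₄ : ℝ) :
    ∫ θ, (A₂ * (1 - tanh (w * θ) ^ 2) + A₃ * (1 - tanh (w * θ) ^ 2) ^ 2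
        + A₄ * (1 - tanh (w * θ) ^ 2) ^ 3) * (1 / cosh (w * θ)) ^ 2
      = (4 / 3 * A₂ + 16 / 15 * A₃ + 32 / 35 * A₄) / w := by
  have hQ (t : ℝ) : HasDerivAt
      (fun t => (A₂ + A₃ + A₄) * t - (A₂ + 2 * A₃ + 3 * A₄) / 3 * t ^ 3
        + (A₃ + 3 * A₄) / 5 * t ^ 5 - A₄ / 7 * t ^ 7)
      (A₂ * (1 - t ^ 2) + A₃ * (1 - t ^ 2) ^ 2 + A₄ * (1 - t ^ 2) ^ 3) t := by
    refine (((((hasDerivAt_id t).const_mul _).sub ((hasDerivAt_pow 3 t).const_mul _)).add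
      ((hasDerivAt_pow 5 t).const_mul _)).sub ((hasDerivAt_pow 7 t).const_mul _)).congr_deriv ?_
    norm_num
    ring
  rw [integral_comp_tanh_mul_sech_sq hw (f := fun t => A₂ * (1 - t ^ 2) + A₃ * (1 - t ^ 2) ^ 2
      + A₄ * (1 - t ^ 2) ^ 3) (by fun_prop),
    intervalIntegral.integral_eq_sub_of_hasDerivAt (fun t _ => hQ t)
      ((by fun_prop : Continuous _).intervalIntegrable _ _)]
  ring

theorem averaged_lagrangian_value_general (a w V ε c1 c3 c4 : ℝ) (hw : 0 < w)
    (u : ℝ → ℝ) (hu : ∀ θ, u θ = a * (1 / Real.cosh (w * θ)) ^ 2) :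
    (∫ θ : ℝ,
        (-(V / 2) * u θ ^ 2 + u θ ^ 3 - 1 / 2 * (deriv u θ) ^ 2
          + ε * (c1 / 12 * u θ ^ 4 + c3 / 2 * u θ * (deriv u θ) ^ 2
              + c3 / 2 * u θ ^ 2 * iteratedDeriv 2 u θ
              + c4 / 2 * (iteratedDeriv 2 u θ) ^ 2)))
      = 16 / 15 * a ^ 3 / w - 8 / 15 * w * a ^ 2 - 2 / 3 * V * a ^ 2 / w
          + ε * (8 / 105 * (a ^ 4 / w) * c1 - 32 / 105 * a ^ 3 * w * c3
              + 32 / 21 * w ^ 3 * a ^ 2 * c4) := by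
  obtain rfl : u = fun θ => a * (1 - tanh (w * θ) ^ 2) :=
    funext fun θ => by rw [hu, one_sub_tanh_sq]
  rw [deriv_sech_sq_profile, iteratedDeriv_two_sech_sq_profile]
  calc _ = ∫ θ, ((-(V / 2) * a ^ 2 - 2 * a ^ 2 * w ^ 2 + ε * (8 * c4 * a ^ 2 * w ^ 4))
            * (1 - tanh (w * θ) ^ 2)
          + (a ^ 3 + 2 * a ^ 2 * w ^ 2 + ε * (4 * c3 * a ^ 3 * w ^ 2 - 24 * c4 * a ^ 2 * w ^ 4))
            * (1 - tanh (w * θ) ^ 2) ^ 2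
          + ε * (c1 * a ^ 4 / 12 - 5 * c3 * a ^ 3 * w ^ 2 + 18 * c4 * a ^ 2 * w ^ 4)
            * (1 - tanh (w * θ) ^ 2) ^ 3) * (1 / cosh (w * θ)) ^ 2 := by
        congr 1
        funext θ
        rw [← one_sub_tanh_sq]
        ring
    _ = _ := by
        rw [integral_poly_tanh_mul_sech_sq hw]
        field_simp
        ring

/-- The averaged Lagrangian of the sech² ansatz `φ'(θ) = a sech²(wθ)`. -/
theorem averaged_lagrangian_value (a w V ε c1 c3 c4 : ℝ) (ha : 0 < a) (hw : 0 < w)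
    (u : ℝ → ℝ) (hu : ∀ θ, u θ = a * (1 / Real.cosh (w * θ)) ^ 2) :
    (∫ θ : ℝ,
        (-(V / 2) * u θ ^ 2 + u θ ^ 3 - 1 / 2 * (deriv u θ) ^ 2
          + ε * (c1 / 12 * u θ ^ 4 + c3 / 2 * u θ * (deriv u θ) ^ 2
              + c3 / 2 * u θ ^ 2 * iteratedDeriv 2 u θ
              + c4 / 2 * (iteratedDeriv 2 u θ) ^ 2)))
      = 16 / 15 * a ^ 3 / w - 8 / 15 * w * a ^ 2 - 2 / 3 * V * a ^ 2 / w
          + ε * (8 / 105 * (a ^ 4 / w) * c1 - 32 / 105 * a ^ 3 * w * c3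
              + 32 / 21 * w ^ 3 * a ^ 2 * c4) :=
  averaged_lagrangian_value_general a w V ε c1 c3 c4 hw u hu
end
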